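/- arXiv:1310.7199 — 4 statements merged into one kernel-verified Lean document; each statement's English description precedes it below -/
import Mathlib

section
/- For $\varepsilon \ge 0$ define the change-of-variables operator $\mathcal{T}_\varepsilon$ on $L^2(\mathbb{R}^{2d})$ by $(\mathcal{T}_\varepsilon\psi)(R,r) := \psi\bigl(R - \tfrac{\varepsilon r}{1+\varepsilon},\, R + \tfrac{r}{1+\varepsilon}\bigr)$. Then for any $\psi \in L^2(\mathbb{R}^{2d})$ such that $(x - X)\cdot(\nabla_X + \nabla_x)\psi \in L^2(\mathbb{R}^{2d})$, one has $\|\mathcal{T}_\varepsilon\psi - \mathcal{T}_0\psi\|_{L^2(\mathbb{R}^{2d})} \le \varepsilon\,\|(x - X)\cdot(\nabla_X + \nabla_x)\psi\|_{L^2(\mathbb{R}^{2d})}$. -/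
/-!
Write `Φ_s (R, r) = (R - s/(1+s) r, R + 1/(1+s) r)`, so that `𝒯_s ψ = ψ ∘ Φ_s`. The relative
coordinate of `Φ_s (R, r)` is `r`, hence `d/ds ψ (Φ_s q) = -(1+s)⁻² (Dψ)(Φ_s q)` with
`Dψ = (x - X)·(∇_X + ∇_x)ψ`. The fundamental theorem of calculus and Cauchy–Schwarz give
`|𝒯_ε ψ - 𝒯_0 ψ|² (q) ≤ ε ∫₀^ε |Dψ (Φ_s q)|² ds`; integrating in `q` and using that every `Φ_s`
is a composition of two shears, hence preserves Lebesgue measure, yields `ε² ‖Dψ‖₂²`.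
-/

open MeasureTheory

/-- The `L²` norm of a function (square root of the integral of `‖f‖²`). -/
noncomputable def L2norm {α : Type*} [MeasureSpace α] {E : Type*} [NormedAddCommGroup E]
    (f : α → E) : ℝ :=
  Real.sqrt (∫ x, ‖f x‖ ^ 2)

/-- The change-of-variables (center of mass / relative coordinate) operator
`(𝒯_ε ψ)(R,r) = ψ(R - εr/(1+ε), R + r/(1+ε))`. -/
noncomputable def Tcm {d : ℕ} (ε : ℝ)
    (ψ : EuclideanSpace ℝ (Fin d) × EuclideanSpace ℝ (Fin d) → ℂ) :
    EuclideanSpace ℝ (Fin d) × EuclideanSpace ℝ (Fin d) → ℂ :=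
  fun p => ψ (p.1 - (ε / (1 + ε)) • p.2, p.1 + (1 / (1 + ε)) • p.2)

open Set
open scoped ENNReal

section Calculus

variable {E : Type*} [NormedAddCommGroup E] [NormedSpace ℝ E] [CompleteSpace E]

theorem enorm_sub_le_setLIntegral_of_hasDerivAt {f f' : ℝ → E} {h : ℝ → ℝ≥0∞} {a b : ℝ}
    (hab : a ≤ b) (hf : ∀ s ∈ Icc a b, HasDerivAt f (f' s) s)
    (hf' : ∀ s ∈ Ioc a b, ‖f' s‖ₑ ≤ h s) :
    ‖f b - f a‖ₑ ≤ ∫⁻ s in Ioc a b, h s := by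
  have hle : ∫⁻ s in Ioc a b, ‖f' s‖ₑ ≤ ∫⁻ s in Ioc a b, h s :=
    lintegral_mono_ae ((ae_restrict_iff' measurableSet_Ioc).2 (.of_forall hf'))
  rcases eq_top_or_lt_top (∫⁻ s in Ioc a b, h s) with htop | hfin
  · simp [htop]
  -- `f'` agrees with the measurable function `deriv f` on `Ioc a b`
  have hmeas : AEStronglyMeasurable f' (volume.restrict (Ioc a b)) :=
    (aestronglyMeasurable_deriv f _).congr <| (ae_restrict_iff' measurableSet_Ioc).2 <|
      .of_forall fun s hs => (hf s (Ioc_subset_Icc_self hs)).deriv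
  have hint : IntervalIntegrable f' volume a b :=
    (intervalIntegrable_iff_integrableOn_Ioc_of_le hab).2 ⟨hmeas, hle.trans_lt hfin⟩
  rw [← intervalIntegral.integral_eq_sub_of_hasDerivAt (by rwa [uIcc_of_le hab]) hint,
    intervalIntegral.integral_of_le hab]
  exact (enorm_integral_le_lintegral_enorm _).trans hle

end Calculus

theorem sq_lintegral_le_measure_univ_mul {α : Type*} [MeasurableSpace α] (μ : Measure α)
    {f : α → ℝ≥0∞} (hf : AEMeasurable f μ) :
    (∫⁻ a, f a ∂μ) ^ 2 ≤ μ univ * ∫⁻ a, f a ^ 2 ∂μ := by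
  have h := ENNReal.lintegral_mul_le_Lp_mul_Lq μ .two_two hf aemeasurable_const (g := 1)
  simp only [Pi.mul_apply, Pi.one_apply, mul_one, ENNReal.one_rpow, lintegral_one] at h
  calc (∫⁻ a, f a ∂μ) ^ 2
      ≤ ((∫⁻ a, f a ^ (2 : ℝ) ∂μ) ^ (1 / 2 : ℝ) * μ univ ^ (1 / 2 : ℝ)) ^ (2 : ℝ) := by
        rw [← ENNReal.rpow_natCast]; exact ENNReal.rpow_le_rpow h (by norm_num)
    _ = μ univ * ∫⁻ a, f a ^ 2 ∂μ := by
        rw [ENNReal.mul_rpow_of_nonneg _ _ (by norm_num), ← ENNReal.rpow_mul, ← ENNReal.rpow_mul]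
        norm_num [mul_comm]

section CenterOfMass

variable {E : Type*} [NormedAddCommGroup E] [NormedSpace ℝ E]

/-- Particle positions `(X, x)` from centre-of-mass and relative coordinates `(R, r)` for the mass
ratio `s`; `Tcm s ψ = ψ ∘ ofCenterOfMass s`. -/
noncomputable def ofCenterOfMass (s : ℝ) (q : E × E) : E × E :=
  (q.1 - (s / (1 + s)) • q.2, q.1 + (1 / (1 + s)) • q.2)

theorem continuous_ofCenterOfMass (s : ℝ) : Continuous (ofCenterOfMass (E := E) s) := by
  unfold ofCenterOfMass; fun_prop

theorem ofCenterOfMass_snd_sub_fst {s : ℝ} (hs : 1 + s ≠ 0) (q : E × E) :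
    (ofCenterOfMass s q).2 - (ofCenterOfMass s q).1 = q.2 := by
  have hsum : s / (1 + s) + 1 / (1 + s) = 1 := by field_simp; ring
  calc (ofCenterOfMass s q).2 - (ofCenterOfMass s q).1
      = (s / (1 + s) + 1 / (1 + s)) • q.2 := by simp only [ofCenterOfMass, add_smul]; abel
    _ = q.2 := by rw [hsum, one_smul]

theorem hasDerivAt_ofCenterOfMass {s : ℝ} (hs : 1 + s ≠ 0) (q : E × E) :
    HasDerivAt (fun t => ofCenterOfMass t q) (-((1 + s) ^ 2)⁻¹ • (q.2, q.2)) s := by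
  have hden : HasDerivAt (fun t : ℝ => 1 + t) 1 s := (hasDerivAt_id s).const_add 1
  have hfst : HasDerivAt (fun t : ℝ => t / (1 + t)) ((1 + s) ^ 2)⁻¹ s := by
    refine ((hasDerivAt_id' s).fun_div hden hs).congr_deriv ?_
    field_simp
    ring
  have hsnd : HasDerivAt (fun t : ℝ => 1 / (1 + t)) (-((1 + s) ^ 2)⁻¹) s := by
    refine ((hasDerivAt_const s (1 : ℝ)).fun_div hden hs).congr_deriv ?_
    field_simp
    ring
  exact (((hfst.smul_const q.2).const_sub q.1).prodMk
    ((hsnd.smul_const q.2).const_add q.1)).congr_deriv (by simp [neg_smul])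

variable [MeasurableSpace E] [BorelSpace E] [SecondCountableTopology E]

theorem measurable_uncurry_ofCenterOfMass :
    Measurable (Function.uncurry (ofCenterOfMass (E := E))) := by
  unfold Function.uncurry ofCenterOfMass
  fun_prop

theorem measurePreserving_add_smul_snd (μ : Measure E) [SFinite μ] [μ.IsAddLeftInvariant]
    (c : ℝ) :
    MeasurePreserving (fun z : E × E => (z.1 + c • z.2, z.2)) (μ.prod μ) (μ.prod μ) := by
  have hshear :
      MeasurePreserving (fun z : E × E => (z.1, c • z.1 + z.2)) (μ.prod μ) (μ.prod μ) :=
    (MeasurePreserving.id μ).skew_product (by fun_prop)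
      (.of_forall fun x => map_add_left_eq_self μ (c • x))
  convert (Measure.measurePreserving_swap.comp hshear).comp Measure.measurePreserving_swap using 1
  ext z <;> simp [add_comm]

theorem measurePreserving_ofCenterOfMass (μ : Measure E) [SFinite μ] [μ.IsAddLeftInvariant]
    {s : ℝ} (hs : 1 + s ≠ 0) :
    MeasurePreserving (ofCenterOfMass s) (μ.prod μ) (μ.prod μ) := by
  convert (measurePreserving_prod_add μ μ).comp
    (measurePreserving_add_smul_snd μ (-(s / (1 + s)))) using 1
  ext q
  · simp [ofCenterOfMass, sub_eq_add_neg]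
  · have hb : 1 / (1 + s) = 1 - s / (1 + s) := by field_simp; ring
    simp only [ofCenterOfMass, Function.comp_apply, hb, sub_smul, one_smul, neg_smul]
    abel

end CenterOfMass

theorem lintegral_setLIntegral_comp_measurePreserving {α β : Type*} [MeasurableSpace α]
    [MeasurableSpace β] {μ : Measure α} {ν : Measure β} [SFinite μ] [SFinite ν]
    {Φ : α → β → β} (hΦ : Measurable (Function.uncurry Φ)) {S : Set α} (hS : MeasurableSet S)
    (hΦS : ∀ s ∈ S, MeasurePreserving (Φ s) ν ν) {G : β → ℝ≥0∞} (hG : Measurable G) :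
    ∫⁻ q, ∫⁻ s in S, G (Φ s q) ∂μ ∂ν = μ S * ∫⁻ q, G q ∂ν := by
  rw [lintegral_lintegral_swap (f := fun q s => G (Φ s q))
      (hG.comp (hΦ.comp measurable_swap)).aemeasurable,
    setLIntegral_congr_fun hS fun s hs => (hΦS s hs).lintegral_comp hG, setLIntegral_const,
    mul_comm]

section RelativeDerivative

variable {E F : Type*} [NormedAddCommGroup E] [NormedSpace ℝ E]
  [NormedAddCommGroup F] [NormedSpace ℝ F]

/-- `(x - X) · (∇_X + ∇_x) ψ` at the point `(X, x)`. -/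
noncomputable def relDeriv (ψ : E × E → F) (p : E × E) : F :=
  fderiv ℝ ψ p (p.2 - p.1, p.2 - p.1)

theorem hasDerivAt_comp_ofCenterOfMass {ψ : E × E → F} (hψ : Differentiable ℝ ψ) {s : ℝ}
    (hs : 1 + s ≠ 0) (q : E × E) :
    HasDerivAt (fun t => ψ (ofCenterOfMass t q))
      (-((1 + s) ^ 2)⁻¹ • relDeriv ψ (ofCenterOfMass s q)) s := by
  have := (hψ _).hasFDerivAt.comp_hasDerivAt s (hasDerivAt_ofCenterOfMass hs q)
  rwa [ContinuousLinearMap.map_smul, ← ofCenterOfMass_snd_sub_fst hs q] at this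

variable [MeasurableSpace E] [BorelSpace E] [SecondCountableTopology E]
  [MeasurableSpace F] [BorelSpace F] [CompleteSpace F]

theorem measurable_relDeriv (ψ : E × E → F) : Measurable (relDeriv ψ) :=
  isBoundedBilinearMap_apply.continuous.measurable.comp
    ((measurable_fderiv ℝ ψ).prodMk (by fun_prop))

theorem enorm_sub_sq_le_setLIntegral_relDeriv {ψ : E × E → F} (hψ : Differentiable ℝ ψ) {ε : ℝ}
    (hε : 0 ≤ ε) (q : E × E) :
    ‖ψ (ofCenterOfMass ε q) - ψ (ofCenterOfMass 0 q)‖ₑ ^ 2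
      ≤ ENNReal.ofReal ε * ∫⁻ s in Ioc 0 ε, ‖relDeriv ψ (ofCenterOfMass s q)‖ₑ ^ 2 := by
  have hbound : ∀ s ∈ Ioc 0 ε, ‖-((1 + s) ^ 2)⁻¹ • relDeriv ψ (ofCenterOfMass s q)‖ₑ
      ≤ ‖relDeriv ψ (ofCenterOfMass s q)‖ₑ := fun s hs => by
    rw [enorm_smul]
    refine mul_le_of_le_one_left zero_le ?_
    rw [enorm_neg, Real.enorm_eq_ofReal_abs, ENNReal.ofReal_le_one, abs_inv, abs_sq]
    exact inv_le_one_of_one_le₀ (by nlinarith [hs.1])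
  have hmeas : Measurable fun s => ‖relDeriv ψ (ofCenterOfMass s q)‖ₑ :=
    ((measurable_relDeriv ψ).comp
      (measurable_uncurry_ofCenterOfMass.comp (measurable_id.prodMk measurable_const))).enorm
  calc ‖ψ (ofCenterOfMass ε q) - ψ (ofCenterOfMass 0 q)‖ₑ ^ 2
      ≤ (∫⁻ s in Ioc 0 ε, ‖relDeriv ψ (ofCenterOfMass s q)‖ₑ) ^ 2 := by
        gcongr
        exact enorm_sub_le_setLIntegral_of_hasDerivAt hε
          (fun s hs => hasDerivAt_comp_ofCenterOfMass hψ (by linarith [hs.1]) q) hbound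
    _ ≤ _ := by
        simpa using
          sq_lintegral_le_measure_univ_mul (volume.restrict (Ioc 0 ε)) hmeas.aemeasurable

theorem lintegral_enorm_sub_sq_le_lintegral_relDeriv (μ : Measure E) [SFinite μ]
    [μ.IsAddLeftInvariant] {ψ : E × E → F} (hψ : Differentiable ℝ ψ) {ε : ℝ} (hε : 0 ≤ ε) :
    ∫⁻ q, ‖ψ (ofCenterOfMass ε q) - ψ (ofCenterOfMass 0 q)‖ₑ ^ 2 ∂μ.prod μ
      ≤ ENNReal.ofReal ε ^ 2 * ∫⁻ p, ‖relDeriv ψ p‖ₑ ^ 2 ∂μ.prod μ :=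
  calc ∫⁻ q, ‖ψ (ofCenterOfMass ε q) - ψ (ofCenterOfMass 0 q)‖ₑ ^ 2 ∂μ.prod μ
      ≤ ∫⁻ q, ENNReal.ofReal ε *
          (∫⁻ s in Ioc 0 ε, ‖relDeriv ψ (ofCenterOfMass s q)‖ₑ ^ 2) ∂μ.prod μ :=
        lintegral_mono fun q => enorm_sub_sq_le_setLIntegral_relDeriv hψ hε q
    _ = ENNReal.ofReal ε ^ 2 * ∫⁻ p, ‖relDeriv ψ p‖ₑ ^ 2 ∂μ.prod μ := by
        rw [lintegral_const_mul' _ _ ENNReal.ofReal_ne_top,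
          lintegral_setLIntegral_comp_measurePreserving measurable_uncurry_ofCenterOfMass
            measurableSet_Ioc (fun s hs => measurePreserving_ofCenterOfMass μ (by linarith [hs.1]))
            ((measurable_relDeriv ψ).enorm.pow_const 2),
          Real.volume_Ioc, sub_zero, ← mul_assoc, sq]

end RelativeDerivative

section L2norm

variable {α : Type*} [MeasureSpace α] {F G : Type*} [NormedAddCommGroup F] [NormedAddCommGroup G]

theorem L2norm_eq_sqrt_toReal_lintegral {f : α → F} (hf : AEStronglyMeasurable f) :
    L2norm f = √(∫⁻ x, ‖f x‖ₑ ^ 2).toReal := by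
  rw [L2norm, integral_eq_lintegral_of_nonneg_ae (.of_forall fun x => by positivity)
    (hf.norm.aemeasurable.pow_const 2).aestronglyMeasurable]
  congr 2
  refine lintegral_congr fun x => ?_
  rw [ENNReal.ofReal_pow (norm_nonneg _), ofReal_norm]

theorem L2norm_le_mul_of_lintegral_le {f : α → F} {g : α → G} (hf : AEStronglyMeasurable f)
    (hg : MemLp g 2) {c : ℝ} (hc : 0 ≤ c)
    (h : ∫⁻ x, ‖f x‖ₑ ^ 2 ≤ ENNReal.ofReal c ^ 2 * ∫⁻ x, ‖g x‖ₑ ^ 2) :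
    L2norm f ≤ c * L2norm g := by
  have hfin : ∫⁻ x, ‖g x‖ₑ ^ 2 ≠ ∞ := by
    simpa using (lintegral_rpow_enorm_lt_top_of_eLpNorm_lt_top two_ne_zero
      ENNReal.ofNat_ne_top hg.eLpNorm_lt_top).ne
  rw [L2norm_eq_sqrt_toReal_lintegral hf, L2norm_eq_sqrt_toReal_lintegral hg.1,
    ← Real.sqrt_sq hc, ← Real.sqrt_mul (sq_nonneg c)]
  gcongr
  calc (∫⁻ x, ‖f x‖ₑ ^ 2).toReal
      ≤ (ENNReal.ofReal c ^ 2 * ∫⁻ x, ‖g x‖ₑ ^ 2).toReal := ENNReal.toReal_mono (by finiteness) h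
    _ = c ^ 2 * (∫⁻ x, ‖g x‖ₑ ^ 2).toReal := by
        rw [ENNReal.toReal_mul, ENNReal.toReal_pow, ENNReal.toReal_ofReal hc]

end L2norm

theorem stmt2_general {d : ℕ} (ε : ℝ) (hε : 0 ≤ ε)
    (ψ : EuclideanSpace ℝ (Fin d) × EuclideanSpace ℝ (Fin d) → ℂ)
    (hψdiff : Differentiable ℝ ψ)
    (hψD : MemLp (fun p : EuclideanSpace ℝ (Fin d) × EuclideanSpace ℝ (Fin d) =>
      fderiv ℝ ψ p (p.2 - p.1, p.2 - p.1)) 2) :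
    L2norm (fun p => Tcm ε ψ p - Tcm 0 ψ p)
      ≤ ε * L2norm (fun p : EuclideanSpace ℝ (Fin d) × EuclideanSpace ℝ (Fin d) =>
          fderiv ℝ ψ p (p.2 - p.1, p.2 - p.1)) := by
  have hcont : Continuous fun p => Tcm ε ψ p - Tcm 0 ψ p :=
    (hψdiff.continuous.comp (continuous_ofCenterOfMass ε)).sub
      (hψdiff.continuous.comp (continuous_ofCenterOfMass 0))
  refine L2norm_le_mul_of_lintegral_le hcont.aestronglyMeasurable hψD hε ?_
  rw [Measure.volume_eq_prod]
  exact lintegral_enorm_sub_sq_le_lintegral_relDeriv volume hψdiff hε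

/-- `‖𝒯_ε ψ - 𝒯₀ ψ‖₂ ≤ ε ‖(x-X)·(∇_X + ∇_x)ψ‖₂`, where the directional
derivative `(x-X)·(∇_X+∇_x)ψ` at `(X,x)` is `fderiv ℝ ψ (X,x) (x-X, x-X)`. -/
theorem stmt2 {d : ℕ} (ε : ℝ) (hε : 0 ≤ ε)
    (ψ : EuclideanSpace ℝ (Fin d) × EuclideanSpace ℝ (Fin d) → ℂ)
    (hψ : MemLp ψ 2) (hψdiff : Differentiable ℝ ψ)
    (hψD : MemLp (fun p : EuclideanSpace ℝ (Fin d) × EuclideanSpace ℝ (Fin d) =>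
      fderiv ℝ ψ p (p.2 - p.1, p.2 - p.1)) 2) :
    L2norm (fun p => Tcm ε ψ p - Tcm 0 ψ p)
      ≤ ε * L2norm (fun p : EuclideanSpace ℝ (Fin d) × EuclideanSpace ℝ (Fin d) =>
          fderiv ℝ ψ p (p.2 - p.1, p.2 - p.1)) :=
  stmt2_general ε hε ψ hψdiff hψD
end

section
/- In dimension one, with scattering amplitudes $t_k, r_k$ satisfying the unitarity relations $|t_k|^2 + |r_k|^2 = 1$, $r_k\overline{t_{-k}} + t_k\overline{r_{-k}} = 0$, $|r_k| = |r_{-k}|$, and with translated scattering operators $S^X = \theta_X S \theta_{-X}$, the collision function $I_\chi(X,X') := \langle S^{X'}\chi \,|\, S^X\chi\rangle$ admits the decomposition $I_\chi(X,X') = 1 - \Theta_\chi(X - X') + i\,\Gamma_\chi(X) - i\,\Gamma_\chi(X')$, where $\Theta_\chi(Y) := \int_{\mathbb{R}} (1 - e^{2ikY})\,|r_k|^2\,|\widehat\chi(k)|^2\,dk$ and $\Gamma_\chi(X) := i\int_{\mathbb{R}} e^{2ikX}\,\overline{r_{-k}}\,t_k\,\overline{\widehat\chi(-k)}\,\widehat\chi(k)\,dk$.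 -/
/-!
Write `Ŝ^X χ = a + b_X` with transmitted part `a k = t_k χ̂(k)` and reflected part
`b_X k = e^{-2ikX} r_{-k} χ̂(-k)`. Both lie in `L²` because `|t|, |r| ≤ 1`, so
`⟨a + b_{X'} | a + b_X⟩` splits into four integrals. Unitarity `|t|² + |r|² = 1` turns `⟨a|a⟩`
into `1 - ∫ |r|²|χ̂|²`; after `k ↦ -k`, `⟨b_{X'}|b_X⟩` is `∫ e^{2ik(X-X')} |r|²|χ̂|²`; `⟨b_{X'}|a⟩` is
the `Γ`-integral at `X'`; and after `k ↦ -k` the relation `r_k t̄_{-k} = -t_k r̄_{-k}` turns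
`⟨a|b_X⟩` into minus the `Γ`-integral at `X`.
-/

open MeasureTheory Complex ComplexConjugate

namespace MeasureTheory

variable {α 𝕜 : Type*} [MeasurableSpace α] {μ : Measure α} [RCLike 𝕜]

lemma MemLp.integrable_conj_mul {f g : α → 𝕜} (hf : MemLp f 2 μ) (hg : MemLp g 2 μ) :
    Integrable (fun x => conj (f x) * g x) μ :=
  hf.star.integrable_mul hg

lemma integral_conj_add_mul_add {f₁ f₂ g₁ g₂ : α → 𝕜} (hf₁ : MemLp f₁ 2 μ) (hf₂ : MemLp f₂ 2 μ)
    (hg₁ : MemLp g₁ 2 μ) (hg₂ : MemLp g₂ 2 μ) :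
    ∫ x, conj (f₁ x + f₂ x) * (g₁ x + g₂ x) ∂μ =
      ∫ x, conj (f₁ x) * g₁ x ∂μ + ∫ x, conj (f₁ x) * g₂ x ∂μ
        + ∫ x, conj (f₂ x) * g₁ x ∂μ + ∫ x, conj (f₂ x) * g₂ x ∂μ := by
  have h₁₁ := hf₁.integrable_conj_mul hg₁
  have h₁₂ := hf₁.integrable_conj_mul hg₂
  have h₂₁ := hf₂.integrable_conj_mul hg₁
  have h₂₂ := hf₂.integrable_conj_mul hg₂
  simp only [map_add, add_mul, mul_add]
  rw [integral_add, integral_add h₁₁ h₂₁, integral_add h₁₂ h₂₂]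
  · ring
  exacts [h₁₁.add h₂₁, h₁₂.add h₂₂]

lemma MemLp.mul_of_ae_norm_le_one {R : Type*} [NormedRing R] {p : ENNReal} {f g : α → R}
    (hg : MemLp g p μ) (hf : AEStronglyMeasurable f μ) (hf1 : ∀ᵐ x ∂μ, ‖f x‖ ≤ 1) :
    MemLp (fun x => f x * g x) p μ :=
  hg.of_le (hf.mul hg.1) <| hf1.mono fun _ hx =>
    (norm_mul_le _ _).trans (mul_le_of_le_one_left (norm_nonneg _) hx)

end MeasureTheory

lemma conj_exp_neg_two_mul_I_mul (x : ℝ) :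
    conj (exp ((-2) * I * (x : ℂ))) = exp (2 * I * (x : ℂ)) := by
  rw [← exp_conj]
  simp [map_ofNat]

lemma norm_exp_neg_two_mul_I_mul (x : ℝ) : ‖exp ((-2) * I * (x : ℂ))‖ = 1 := by
  rw [norm_exp]; simp

noncomputable def reflectedWave (r ch : ℝ → ℂ) (X k : ℝ) : ℂ :=
  exp ((-2) * I * ((k * X : ℝ) : ℂ)) * r (-k) * ch (-k)

lemma integral_one_sub_exp_mul_mul {f g : ℝ → ℂ} (hfg : Integrable (fun k => f k * g k))
    (Y : ℝ) :
    ∫ k, (1 - exp (2 * I * ((k * Y : ℝ) : ℂ))) * f k * g k =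
      (∫ k, f k * g k) - ∫ k, exp (2 * I * ((k * Y : ℝ) : ℂ)) * f k * g k := by
  have he : Integrable (fun k => exp (2 * I * ((k * Y : ℝ) : ℂ)) * f k * g k) := by
    simpa only [mul_assoc] using hfg.bdd_mul (c := 1) (by fun_prop)
      (Filter.Eventually.of_forall fun k => by rw [norm_exp]; simp)
  rw [← integral_sub hfg he]
  congr 1; ext k; ring

section Scattering

variable {t r ch : ℝ → ℂ}

lemma memLp_two_transmitted (ht : Measurable t) (hch : MemLp ch 2)
    (hunit : ∀ k : ℝ, k ≠ 0 → ‖t k‖ ^ 2 + ‖r k‖ ^ 2 = 1) :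
    MemLp (fun k => t k * ch k) 2 :=
  hch.mul_of_ae_norm_le_one ht.aestronglyMeasurable <| (volume.ae_ne 0).mono fun k hk => by
    nlinarith [hunit k hk, norm_nonneg (t k), norm_nonneg (r k)]

lemma memLp_two_reflectedWave (hr : Measurable r) (hch : MemLp ch 2)
    (hunit : ∀ k : ℝ, k ≠ 0 → ‖t k‖ ^ 2 + ‖r k‖ ^ 2 = 1) (X : ℝ) :
    MemLp (reflectedWave r ch X) 2 := by
  have hch' : MemLp (fun k => ch (-k)) 2 :=
    hch.comp_measurePreserving (Measure.measurePreserving_neg volume)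
  refine hch'.mul_of_ae_norm_le_one (by fun_prop) ((volume.ae_ne 0).mono fun k hk => ?_)
  rw [norm_mul, norm_exp_neg_two_mul_I_mul, one_mul]
  nlinarith [hunit (-k) (neg_ne_zero.2 hk), norm_nonneg (t (-k)), norm_nonneg (r (-k))]

lemma integrable_norm_sq_mul_norm_sq (hr : Measurable r)
    (hint : Integrable (fun k => ‖ch k‖ ^ 2))
    (hunit : ∀ k : ℝ, k ≠ 0 → ‖t k‖ ^ 2 + ‖r k‖ ^ 2 = 1) :
    Integrable (fun k => ((‖r k‖ ^ 2 : ℝ) : ℂ) * ((‖ch k‖ ^ 2 : ℝ) : ℂ)) :=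
  hint.ofReal.bdd_mul (c := 1) (by fun_prop) <| (volume.ae_ne 0).mono fun k hk => by
    rw [norm_real, Real.norm_of_nonneg (by positivity)]
    nlinarith [hunit k hk, norm_nonneg (t k)]

lemma integral_conj_transmitted_mul_self (hint : Integrable (fun k => ‖ch k‖ ^ 2))
    (hnorm : ∫ k, ‖ch k‖ ^ 2 = 1)
    (hw : Integrable (fun k => ((‖r k‖ ^ 2 : ℝ) : ℂ) * ((‖ch k‖ ^ 2 : ℝ) : ℂ)))
    (hunit : ∀ k : ℝ, k ≠ 0 → ‖t k‖ ^ 2 + ‖r k‖ ^ 2 = 1) :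
    ∫ k, conj (t k * ch k) * (t k * ch k) =
      1 - ∫ k, ((‖r k‖ ^ 2 : ℝ) : ℂ) * ((‖ch k‖ ^ 2 : ℝ) : ℂ) := by
  have hpt : ∀ᵐ k : ℝ, conj (t k * ch k) * (t k * ch k) =
      ((‖ch k‖ ^ 2 : ℝ) : ℂ) - ((‖r k‖ ^ 2 : ℝ) : ℂ) * ((‖ch k‖ ^ 2 : ℝ) : ℂ) :=
    (volume.ae_ne 0).mono fun k hk => by
      have h : (‖t k‖ : ℂ) ^ 2 + (‖r k‖ : ℂ) ^ 2 = 1 := by exact_mod_cast hunit k hk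
      rw [conj_mul', norm_mul]
      push_cast
      linear_combination (‖ch k‖ : ℂ) ^ 2 * h
  rw [integral_congr_ae hpt, integral_sub _ hw, integral_complex_ofReal, hnorm, ofReal_one]
  exact hint.ofReal

lemma integral_conj_transmitted_mul_reflectedWave
    (hunit : ∀ k : ℝ, k ≠ 0 → r k * conj (t (-k)) + t k * conj (r (-k)) = 0) (X : ℝ) :
    ∫ k, conj (t k * ch k) * reflectedWave r ch X k =
      -∫ k, exp (2 * I * ((k * X : ℝ) : ℂ)) * conj (r (-k)) * t k * conj (ch (-k)) * ch k := by
  set F : ℝ → ℂ := fun k =>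
    exp (2 * I * ((k * X : ℝ) : ℂ)) * conj (t (-k)) * conj (ch (-k)) * r k * ch k
  calc ∫ k, conj (t k * ch k) * reflectedWave r ch X k = ∫ k, F (-k) := by
        congr 1; ext k
        have he : exp (2 * I * ((-k * X : ℝ) : ℂ)) = exp ((-2) * I * ((k * X : ℝ) : ℂ)) := by
          congr 1; push_cast; ring
        simp only [F, reflectedWave, neg_neg, map_mul, he]
        ring
    _ = ∫ k, F k := integral_neg_eq_self F volume
    _ = ∫ k, -(exp (2 * I * ((k * X : ℝ) : ℂ)) * conj (r (-k)) * t k * conj (ch (-k)) * ch k) :=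
        integral_congr_ae <| (volume.ae_ne 0).mono fun k hk => by
          linear_combination (exp (2 * I * ((k * X : ℝ) : ℂ)) * conj (ch (-k)) * ch k) *
            hunit k hk
    _ = _ := integral_neg _

lemma integral_conj_reflectedWave_mul_transmitted (X : ℝ) :
    ∫ k, conj (reflectedWave r ch X k) * (t k * ch k) =
      ∫ k, exp (2 * I * ((k * X : ℝ) : ℂ)) * conj (r (-k)) * t k * conj (ch (-k)) * ch k := by
  congr 1; ext k
  rw [reflectedWave, map_mul, map_mul, conj_exp_neg_two_mul_I_mul]
  ring

lemma integral_conj_reflectedWave_mul_reflectedWave (X X' : ℝ) :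
    ∫ k, conj (reflectedWave r ch X' k) * reflectedWave r ch X k =
      ∫ k, exp (2 * I * ((k * (X - X') : ℝ) : ℂ)) * ((‖r k‖ ^ 2 : ℝ) : ℂ)
        * ((‖ch k‖ ^ 2 : ℝ) : ℂ) := by
  conv_rhs => rw [← integral_neg_eq_self]
  congr 1; ext k
  have he : exp (2 * I * ((-k * (X - X') : ℝ) : ℂ)) =
      exp (2 * I * ((k * X' : ℝ) : ℂ)) * exp ((-2) * I * ((k * X : ℝ) : ℂ)) := by
    rw [← exp_add]; congr 1; push_cast; ring
  rw [reflectedWave, reflectedWave, map_mul, map_mul, conj_exp_neg_two_mul_I_mul, he,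
    ofReal_pow, ofReal_pow, ← conj_mul', ← conj_mul']
  ring

end Scattering

theorem stmt5_general (t r ch : ℝ → ℂ)
    (ht : Measurable t) (hr : Measurable r) (hch : Measurable ch)
    (hint : Integrable (fun k : ℝ => ‖ch k‖ ^ 2))
    (hnorm : ∫ k : ℝ, ‖ch k‖ ^ 2 = 1)
    (hunit1 : ∀ k : ℝ, k ≠ 0 → ‖t k‖ ^ 2 + ‖r k‖ ^ 2 = 1)
    (hunit2 : ∀ k : ℝ, k ≠ 0 →
      r k * (starRingEnd ℂ) (t (-k)) + t k * (starRingEnd ℂ) (r (-k)) = 0) :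
    ∀ X X' : ℝ,
      (∫ k : ℝ,
        (starRingEnd ℂ)
            (t k * ch k + Complex.exp ((-2) * Complex.I * ((k * X' : ℝ) : ℂ)) * r (-k) * ch (-k))
          * (t k * ch k + Complex.exp ((-2) * Complex.I * ((k * X : ℝ) : ℂ)) * r (-k) * ch (-k)))
      = 1
        - (∫ k : ℝ, (1 - Complex.exp (2 * Complex.I * ((k * (X - X') : ℝ) : ℂ)))
            * ((‖r k‖ ^ 2 : ℝ) : ℂ) * ((‖ch k‖ ^ 2 : ℝ) : ℂ))
        + Complex.I * (Complex.I * ∫ k : ℝ,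
            Complex.exp (2 * Complex.I * ((k * X : ℝ) : ℂ)) * (starRingEnd ℂ) (r (-k)) * t k
              * (starRingEnd ℂ) (ch (-k)) * ch k)
        - Complex.I * (Complex.I * ∫ k : ℝ,
            Complex.exp (2 * Complex.I * ((k * X' : ℝ) : ℂ)) * (starRingEnd ℂ) (r (-k)) * t k
              * (starRingEnd ℂ) (ch (-k)) * ch k) := by
  intro X X'
  have hch2 : MemLp ch 2 := (memLp_two_iff_integrable_sq_norm hch.aestronglyMeasurable).2 hint
  have htr := memLp_two_transmitted ht hch2 hunit1
  have hw := integrable_norm_sq_mul_norm_sq hr hint hunit1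
  change ∫ k, conj (t k * ch k + reflectedWave r ch X' k) * (t k * ch k + reflectedWave r ch X k)
    = _
  rw [integral_conj_add_mul_add htr (memLp_two_reflectedWave hr hch2 hunit1 X') htr
      (memLp_two_reflectedWave hr hch2 hunit1 X),
    integral_conj_transmitted_mul_self hint hnorm hw hunit1,
    integral_conj_transmitted_mul_reflectedWave hunit2, integral_conj_reflectedWave_mul_transmitted,
    integral_conj_reflectedWave_mul_reflectedWave, integral_one_sub_exp_mul_mul hw]
  simp only [← mul_assoc, I_mul_I]
  ring

/-- decomposition of the collision function: with the translated
scattering operators acting in Fourier variables by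
`Ŝ^Xχ(k) = t_k χ̂(k) + e^{-2ikX} r_{-k} χ̂(-k)` and `χ̂ = ch` normalized in `L²`,
the collision function `I_χ(X,X') = ⟨S^{X'}χ | S^Xχ⟩` (computed in Fourier
variables) equals `1 - Θ_χ(X-X') + iΓ_χ(X) - iΓ_χ(X')`. -/
theorem stmt5 (t r ch : ℝ → ℂ)
    (ht : Measurable t) (hr : Measurable r) (hch : Measurable ch)
    (hint : Integrable (fun k : ℝ => ‖ch k‖ ^ 2))
    (hnorm : ∫ k : ℝ, ‖ch k‖ ^ 2 = 1)
    (hunit1 : ∀ k : ℝ, k ≠ 0 → ‖t k‖ ^ 2 + ‖r k‖ ^ 2 = 1)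
    (hunit2 : ∀ k : ℝ, k ≠ 0 →
      r k * (starRingEnd ℂ) (t (-k)) + t k * (starRingEnd ℂ) (r (-k)) = 0)
    (hunit3 : ∀ k : ℝ, k ≠ 0 → ‖r k‖ = ‖r (-k)‖) :
    ∀ X X' : ℝ,
      (∫ k : ℝ,
        (starRingEnd ℂ)
            (t k * ch k + Complex.exp ((-2) * Complex.I * ((k * X' : ℝ) : ℂ)) * r (-k) * ch (-k))
          * (t k * ch k + Complex.exp ((-2) * Complex.I * ((k * X : ℝ) : ℂ)) * r (-k) * ch (-k)))
      = 1
        - (∫ k : ℝ, (1 - Complex.exp (2 * Complex.I * ((k * (X - X') : ℝ) : ℂ)))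
            * ((‖r k‖ ^ 2 : ℝ) : ℂ) * ((‖ch k‖ ^ 2 : ℝ) : ℂ))
        + Complex.I * (Complex.I * ∫ k : ℝ,
            Complex.exp (2 * Complex.I * ((k * X : ℝ) : ℂ)) * (starRingEnd ℂ) (r (-k)) * t k
              * (starRingEnd ℂ) (ch (-k)) * ch k)
        - Complex.I * (Complex.I * ∫ k : ℝ,
            Complex.exp (2 * Complex.I * ((k * X' : ℝ) : ℂ)) * (starRingEnd ℂ) (r (-k)) * t k
              * (starRingEnd ℂ) (ch (-k)) * ch k) :=
  stmt5_general t r ch ht hr hch hint hnorm hunit1 hunit2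
end

section
/- Let $A$ be a self-adjoint trace-class operator on a Hilbert space of the form $A = P - \gamma$, where $P$ is a rank-one orthogonal projection, $\gamma \ge 0$ is a positive operator, and $\mathrm{Tr}\,A = 0$. Then $A$ has at most one positive eigenvalue (counted without multiplicity as an eigenvalue, i.e. the positive part of $A$ has rank at most one), and consequently $\|A\|_{\mathcal{L}^1} = 2\|A\|_{op} \le 2\|A\|_{HS}$, where $\|\cdot\|_{\mathcal{L}^1}$, $\|\cdot\|_{op}$, $\|\cdot\|_{HS}$ denote the trace-class, operator, and Hilbert–Schmidt norms. -/
/-!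
On `v⊥` the form `x ↦ ⟨x, A x⟩ = -⟨x, γ x⟩` is nonpositive. Two orthonormal eigenvectors
`e i`, `e j` with positive eigenvalues span a plane meeting `v⊥` in a nonzero vector on which
the form is positive, so at most one eigenvalue is positive. Since `∑ λ = 0`, the positive and
negative parts of `λ` have equal sums `s`, so `‖A‖₁ = 2s`; every `|λ i|` is at most `s`, and
the (at most one) positive eigenvalue equals `s`, so `‖A‖_op = s`.
-/

section Scalar

variable {ι : Type*} {f : ι → ℝ}

theorem summable_sq_of_summable_abs (hf : Summable fun i => |f i|) :
    Summable fun i => f i ^ 2 := by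
  refine (hf.mul_left (∑' j, |f j|)).of_nonneg_of_le (fun i => sq_nonneg _) fun i => ?_
  rw [← sq_abs, sq]
  exact mul_le_mul_of_nonneg_right (hf.le_tsum i fun _ _ => abs_nonneg _) (abs_nonneg _)

theorem posPart_le_abs (a : ℝ) : a⁺ ≤ |a| := by
  rw [← posPart_add_negPart]; exact le_add_of_nonneg_right (negPart_nonneg a)

theorem negPart_le_abs (a : ℝ) : a⁻ ≤ |a| := by
  rw [← posPart_add_negPart]; exact le_add_of_nonneg_left (posPart_nonneg a)

theorem summable_posPart_of_summable_abs (hf : Summable fun i => |f i|) :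
    Summable fun i => (f i)⁺ :=
  hf.of_nonneg_of_le (fun _ => posPart_nonneg _) fun _ => posPart_le_abs _

theorem summable_negPart_of_summable_abs (hf : Summable fun i => |f i|) :
    Summable fun i => (f i)⁻ :=
  hf.of_nonneg_of_le (fun _ => negPart_nonneg _) fun _ => negPart_le_abs _

theorem tsum_negPart_eq_tsum_posPart (hf : Summable fun i => |f i|) (h0 : ∑' i, f i = 0) :
    ∑' i, (f i)⁻ = ∑' i, (f i)⁺ := by
  have := (summable_posPart_of_summable_abs hf).tsum_sub (summable_negPart_of_summable_abs hf)
  simp only [posPart_sub_negPart, h0] at this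
  linarith

theorem tsum_abs_eq_two_mul_tsum_posPart (hf : Summable fun i => |f i|)
    (h0 : ∑' i, f i = 0) : ∑' i, |f i| = 2 * ∑' i, (f i)⁺ := by
  simp only [← posPart_add_negPart]
  rw [(summable_posPart_of_summable_abs hf).tsum_add (summable_negPart_of_summable_abs hf),
    tsum_negPart_eq_tsum_posPart hf h0, two_mul]

theorem abs_le_tsum_posPart (hf : Summable fun i => |f i|) (h0 : ∑' i, f i = 0) (i : ι) :
    |f i| ≤ ∑' j, (f j)⁺ := by
  rw [← posPart_add_negPart]
  rcases le_total 0 (f i) with hi | hi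
  · rw [negPart_eq_zero.2 hi, add_zero]
    exact (summable_posPart_of_summable_abs hf).le_tsum i fun _ _ => posPart_nonneg _
  · rw [posPart_eq_zero.2 hi, zero_add, ← tsum_negPart_eq_tsum_posPart hf h0]
    exact (summable_negPart_of_summable_abs hf).le_tsum i fun _ _ => negPart_nonneg _

theorem tsum_posPart_le_iSup_abs (hf : Summable fun i => |f i|)
    (hpos : {i | 0 < f i}.Subsingleton) : ∑' i, (f i)⁺ ≤ ⨆ i, |f i| := by
  rcases hpos.eq_empty_or_singleton with hempty | ⟨i₀, hi₀⟩
  · have hzero : ∀ i, (f i)⁺ = 0 := fun i =>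
      posPart_eq_zero.2 (not_lt.1 fun hi => hempty.subset hi)
    simp only [hzero, tsum_zero]
    exact Real.iSup_nonneg fun i => abs_nonneg _
  · have hzero : ∀ i, i ≠ i₀ → (f i)⁺ = 0 := fun i hi =>
      posPart_eq_zero.2 (not_lt.1 fun h => hi (hi₀.subset h))
    have hbdd : BddAbove (Set.range fun i => |f i|) :=
      ⟨∑' j, |f j|, by rintro _ ⟨i, rfl⟩; exact hf.le_tsum i fun _ _ => abs_nonneg _⟩
    rw [tsum_eq_single i₀ hzero]
    exact (posPart_le_abs _).trans (le_ciSup hbdd i₀)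

theorem iSup_abs_eq_tsum_posPart (hf : Summable fun i => |f i|) (h0 : ∑' i, f i = 0)
    (hpos : {i | 0 < f i}.Subsingleton) : ⨆ i, |f i| = ∑' i, (f i)⁺ :=
  le_antisymm
    (Real.iSup_le (abs_le_tsum_posPart hf h0) (tsum_nonneg fun _ => posPart_nonneg _))
    (tsum_posPart_le_iSup_abs hf hpos)

theorem iSup_abs_le_sqrt_tsum_sq (hf : Summable fun i => f i ^ 2) :
    ⨆ i, |f i| ≤ Real.sqrt (∑' i, f i ^ 2) :=
  Real.iSup_le (fun i => Real.abs_le_sqrt (hf.le_tsum i fun _ _ => sq_nonneg _))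
    (Real.sqrt_nonneg _)

end Scalar

section Operator

variable {H : Type*} [NormedAddCommGroup H] [InnerProductSpace ℂ H]

theorem re_inner_self_nonpos_of_inner_eq_zero {A γ : H →L[ℂ] H} {v : H}
    (hγ : ∀ x, 0 ≤ (inner ℂ x (γ x)).re) (hA : ∀ x, A x = inner ℂ v x • v - γ x) {x : H}
    (hx : inner ℂ v x = 0) : (inner ℂ x (A x)).re ≤ 0 := by
  simpa [hA x, inner_sub_right, inner_smul_right, hx] using hγ x

variable {ι : Type*} {e : ι → H} {lam : ι → ℝ}

theorem apply_eq_smul_of_eq_tsum (he : Orthonormal ℂ e) {A : H →L[ℂ] H}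
    (hA : ∀ x, A x = ∑' i, ((lam i : ℂ) * inner ℂ (e i) x) • e i) (i : ι) :
    A (e i) = (lam i : ℂ) • e i := by
  classical
  rw [hA, tsum_eq_single i fun j hj => by simp [orthonormal_iff_ite.1 he, hj]]
  simp [he.1 i]

theorem re_inner_smul_add_smul_apply (he : Orthonormal ℂ e) {A : H →L[ℂ] H}
    (hAe : ∀ i, A (e i) = (lam i : ℂ) • e i) {i j : ι} (hij : i ≠ j) (a b : ℂ) :
    (inner ℂ (a • e i + b • e j) (A (a • e i + b • e j))).re
      = lam i * ‖a‖ ^ 2 + lam j * ‖b‖ ^ 2 := by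
  classical
  have hsq : ∀ (c : ℝ) (z : ℂ), (z * c * starRingEnd ℂ z).re = c * ‖z‖ ^ 2 := by
    intro c z
    rw [mul_right_comm, Complex.mul_conj', ← Complex.ofReal_pow, ← Complex.ofReal_mul,
      Complex.ofReal_re, mul_comm]
  simp only [map_add, map_smul, hAe, smul_smul, inner_add_left, inner_add_right,
    inner_smul_left, inner_smul_right, orthonormal_iff_ite.1 he, if_true, if_neg hij,
    if_neg hij.symm, mul_one, mul_zero, add_zero, zero_add, Complex.add_re, hsq]

theorem setOf_pos_subsingleton_of_re_inner_nonpos (he : Orthonormal ℂ e) {A : H →L[ℂ] H}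
    (hAe : ∀ i, A (e i) = (lam i : ℂ) • e i) {v : H}
    (hneg : ∀ x, inner ℂ v x = 0 → (inner ℂ x (A x)).re ≤ 0) :
    {i | 0 < lam i}.Subsingleton := by
  intro i (hi : 0 < lam i) j (hj : 0 < lam j)
  by_contra hij
  have hform : ∀ a b : ℂ, inner ℂ v (a • e i + b • e j) = 0 →
      lam i * ‖a‖ ^ 2 + lam j * ‖b‖ ^ 2 ≤ 0 := fun a b hv =>
    re_inner_smul_add_smul_apply he hAe hij a b ▸ hneg _ hv
  by_cases hvi : inner ℂ v (e i) = 0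
  · have := hform 1 0 (by simp [hvi])
    simp only [norm_one, norm_zero] at this
    linarith
  · have := hform (inner ℂ v (e j)) (-inner ℂ v (e i))
      (by simp only [inner_add_right, inner_smul_right]; ring)
    have hb : 0 < ‖-inner ℂ v (e i)‖ := norm_pos_iff.2 (neg_ne_zero.2 hvi)
    nlinarith [mul_pos hj (pow_pos hb 2), mul_nonneg hi.le (sq_nonneg ‖inner ℂ v (e j)‖)]

end Operator

theorem stmt12_general {H : Type*} [NormedAddCommGroup H] [InnerProductSpace ℂ H]
    {ι : Type*}
    (e : ι → H) (he : Orthonormal ℂ e)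
    (lam : ι → ℝ) (hsum : Summable fun i => |lam i|)
    (A : H →L[ℂ] H)
    (hA : ∀ x : H, A x = ∑' i, ((lam i : ℂ) * (inner ℂ (e i) x : ℂ)) • e i)
    (v : H)
    (γ : H →L[ℂ] H)
    (hγpos : ∀ x : H, 0 ≤ (inner ℂ x (γ x) : ℂ).re)
    (hdecomp : ∀ x : H, A x = (inner ℂ v x : ℂ) • v - γ x)
    (htr : ∑' i, lam i = 0) :
    {i : ι | 0 < lam i}.Subsingleton
    ∧ (∑' i, |lam i|) = 2 * (⨆ i, |lam i|)
    ∧ 2 * (⨆ i, |lam i|) ≤ 2 * Real.sqrt (∑' i, (lam i) ^ 2) := by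
  have hpos : {i : ι | 0 < lam i}.Subsingleton :=
    setOf_pos_subsingleton_of_re_inner_nonpos he (apply_eq_smul_of_eq_tsum he hA)
      fun _ => re_inner_self_nonpos_of_inner_eq_zero hγpos hdecomp
  refine ⟨hpos, ?_, ?_⟩
  · rw [iSup_abs_eq_tsum_posPart hsum htr hpos, tsum_abs_eq_two_mul_tsum_posPart hsum htr]
  · gcongr
    exact iSup_abs_le_sqrt_tsum_sq (summable_sq_of_summable_abs hsum)

/-- let `A` be a self-adjoint trace-class operator of the form
`A = P - γ` with `P = |v⟩⟨v|` a rank-one orthogonal projection and `γ ≥ 0`, with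
`Tr A = 0`. `A` is presented through a spectral decomposition
`A x = ∑' i, λ_i ⟨e_i, x⟩ e_i` with `(e_i)` orthonormal and `λ` absolutely
summable; `Tr A = ∑ λ_i`, the trace norm is `∑ |λ_i|`, the operator norm is
`⨆ |λ_i|` and the Hilbert–Schmidt norm is `√(∑ λ_i²)`. Then `A` has at most one
positive eigenvalue, and `‖A‖₁ = 2‖A‖_op ≤ 2‖A‖_{HS}`. -/
theorem stmt12 {H : Type*} [NormedAddCommGroup H] [InnerProductSpace ℂ H]
    [CompleteSpace H] {ι : Type*} [Countable ι]
    (e : ι → H) (he : Orthonormal ℂ e)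
    (lam : ι → ℝ) (hsum : Summable fun i => |lam i|)
    (A : H →L[ℂ] H)
    (hA : ∀ x : H, A x = ∑' i, ((lam i : ℂ) * (inner ℂ (e i) x : ℂ)) • e i)
    (v : H) (hv : ‖v‖ = 1)
    (γ : H →L[ℂ] H)
    (hγpos : ∀ x : H, 0 ≤ (inner ℂ x (γ x) : ℂ).re)
    (hdecomp : ∀ x : H, A x = (inner ℂ v x : ℂ) • v - γ x)
    (htr : ∑' i, lam i = 0) :
    {i : ι | 0 < lam i}.Subsingleton
    ∧ (∑' i, |lam i|) = 2 * (⨆ i, |lam i|)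
    ∧ 2 * (⨆ i, |lam i|) ≤ 2 * Real.sqrt (∑' i, (lam i) ^ 2) :=
  stmt12_general e he lam hsum A hA v γ hγpos hdecomp htr
end

section
/- Let $\varphi_+(X) = (2\pi)^{-1/4}\sigma_H^{-1/2}\,e^{-(X-X_0)^2/(4\sigma_H^2)}e^{-ip_H X}$ be a normalized Gaussian with spread $\sigma_H > 0$, and let $\sigma > 0$. Then the Hilbert–Schmidt norm of the operator with integral kernel $\varphi_+(X)\overline{\varphi_+(X')}\bigl(1 - e^{-(X-X')^2/(2\sigma^2)}\bigr)$ satisfies $\Bigl\|\varphi_+(X)\overline{\varphi_+(X')}\bigl(1 - e^{-(X-X')^2/(2\sigma^2)}\bigr)\Bigr\|_{HS}^2 \le \frac{2\sigma_H^2}{\sigma^2}$. -/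
/-!
`|φ₊|²` is the Gaussian density `ρ` of mean `X₀` and variance `σ_H²`, so the squared
Hilbert–Schmidt norm is `∫∫ ρ(X) ρ(X') (1 - e^{-(X-X')²/(2σ²)})²`. Since
`(X - X')² ≤ 2(X - X₀)² + 2(X' - X₀)²`, the factor `(1 - e)²` is at most `1 - G(X) G(X')` with
`G(X) = e^{-(X-X₀)²/σ²}`, and the double integral splits into
`(∫ ρ)² - (∫ ρ G)² = 1 - σ²/(2σ_H² + σ²) ≤ 2σ_H²/σ²`.
-/

open MeasureTheory Complex ProbabilityTheory Real
open scoped NNReal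

noncomputable def gaussianWavePacket (σH X0 pH X : ℝ) : ℂ :=
  ((((2 * Real.pi) ^ (-(1 : ℝ) / 4) / Real.sqrt σH) : ℝ) : ℂ)
    * Complex.exp (((-((X - X0) ^ 2) / (4 * σH ^ 2) : ℝ) : ℂ))
    * Complex.exp ((-Complex.I) * ((pH * X : ℝ) : ℂ))

lemma norm_sq_gaussianWavePacket {σH : ℝ} (hσH : 0 < σH) (X0 pH X : ℝ) :
    ‖gaussianWavePacket σH X0 pH X‖ ^ 2 = gaussianPDFReal X0 (σH ^ 2).toNNReal X := by
  have h2π : (0 : ℝ) < 2 * π := by positivity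
  have hprefactor : ((2 * π) ^ (-(1 : ℝ) / 4)) ^ 2 = (√(2 * π))⁻¹ := by
    rw [← Real.rpow_natCast, ← Real.rpow_mul h2π.le, Real.sqrt_eq_rpow, ← Real.rpow_neg h2π.le]
    norm_num
  rw [gaussianWavePacket, norm_mul, norm_mul, norm_exp, norm_exp, norm_real, Real.norm_eq_abs,
    abs_of_nonneg (by positivity), ofReal_re]
  simp only [neg_mul, neg_re, mul_re, I_re, ofReal_re, zero_mul, I_im, ofReal_im, mul_zero,
    sub_self, neg_zero, Real.exp_zero, mul_one]
  rw [gaussianPDFReal, Real.coe_toNNReal _ (sq_nonneg σH), mul_pow, div_pow, hprefactor,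
    Real.sq_sqrt hσH.le, sq, ← Real.exp_add, Real.sqrt_mul' _ (sq_nonneg σH),
    Real.sqrt_sq hσH.le, mul_inv]
  congr 2
  field_simp
  ring

lemma norm_mul_conj_mul_one_sub_ofReal_sq (a b : ℂ) (r : ℝ) :
    ‖a * (starRingEnd ℂ) b * (1 - (r : ℂ))‖ ^ 2 = ‖a‖ ^ 2 * ‖b‖ ^ 2 * (1 - r) ^ 2 := by
  rw [← ofReal_one, ← ofReal_sub, norm_mul, norm_mul, RCLike.norm_conj, norm_real,
    Real.norm_eq_abs, mul_pow, mul_pow, sq_abs]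

lemma one_sub_exp_sq_le_one_sub_exp_mul_exp (x y c σ : ℝ) :
    (1 - rexp (-((x - y) ^ 2 / (2 * σ ^ 2)))) ^ 2
      ≤ 1 - rexp (-(x - c) ^ 2 / σ ^ 2) * rexp (-(y - c) ^ 2 / σ ^ 2) := by
  have hle : rexp (-(x - c) ^ 2 / σ ^ 2) * rexp (-(y - c) ^ 2 / σ ^ 2)
      ≤ rexp (-((x - y) ^ 2 / (2 * σ ^ 2))) := by
    rw [← Real.exp_add, Real.exp_le_exp, neg_div, neg_div, ← neg_add, neg_le_neg_iff, ← add_div,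
      ← mul_div_mul_left _ (σ ^ 2) two_ne_zero]
    gcongr
    nlinarith [sq_nonneg (x + y - 2 * c)]
  have h1 : rexp (-((x - y) ^ 2 / (2 * σ ^ 2))) ≤ 1 :=
    Real.exp_le_one_iff.2 (neg_nonpos.2 (by positivity))
  have h0 := Real.exp_pos (-((x - y) ^ 2 / (2 * σ ^ 2)))
  nlinarith

lemma gaussianPDFReal_mul_exp_eq (μ : ℝ) {v : ℝ≥0} (hv : v ≠ 0) {s : ℝ} (hs : 0 < s) (x : ℝ) :
    gaussianPDFReal μ v x * rexp (-(x - μ) ^ 2 / s)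
      = (√(2 * π * v))⁻¹ * rexp (-(1 / (2 * v) + 1 / s) * (x - μ) ^ 2) := by
  have hv' : (0 : ℝ) < v := by positivity
  rw [gaussianPDFReal, mul_assoc, ← Real.exp_add]
  congr 2
  field_simp
  ring

lemma integrable_gaussianPDFReal_mul_exp (μ : ℝ) {v : ℝ≥0} (hv : v ≠ 0) {s : ℝ} (hs : 0 < s) :
    Integrable (fun x ↦ gaussianPDFReal μ v x * rexp (-(x - μ) ^ 2 / s)) := by
  have hv' : (0 : ℝ) < v := by positivity
  simp_rw [gaussianPDFReal_mul_exp_eq μ hv hs]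
  exact ((integrable_exp_neg_mul_sq (by positivity)).comp_sub_right μ).const_mul _

lemma integral_gaussianPDFReal_mul_exp (μ : ℝ) {v : ℝ≥0} (hv : v ≠ 0) {s : ℝ} (hs : 0 < s) :
    ∫ x, gaussianPDFReal μ v x * rexp (-(x - μ) ^ 2 / s) = √(s / (2 * v + s)) := by
  have hv' : (0 : ℝ) < v := by positivity
  simp_rw [gaussianPDFReal_mul_exp_eq μ hv hs]
  rw [integral_const_mul,
    integral_sub_right_eq_self (fun y ↦ rexp (-(1 / (2 * v) + 1 / s) * y ^ 2)), integral_gaussian,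
    ← Real.sqrt_inv, ← Real.sqrt_mul (by positivity)]
  congr 1
  field_simp
  ring

lemma integral_integral_le_sq_sub_sq {α : Type*} [MeasurableSpace α] {μ : Measure α}
    {ρ g : α → ℝ} {K : α → α → ℝ} (hρ : Integrable ρ μ) (hρg : Integrable (fun x ↦ ρ x * g x) μ)
    (hK_nonneg : ∀ x y, 0 ≤ K x y) (hK_le : ∀ x y, K x y ≤ ρ x * ρ y - ρ x * g x * (ρ y * g y)) :
    ∫ x, ∫ y, K x y ∂μ ∂μ ≤ (∫ x, ρ x ∂μ) ^ 2 - (∫ x, ρ x * g x ∂μ) ^ 2 := by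
  set A := ∫ x, ρ x ∂μ
  set B := ∫ x, ρ x * g x ∂μ
  have inner (x : α) : ∫ y, K x y ∂μ ≤ ρ x * A - ρ x * g x * B :=
    calc ∫ y, K x y ∂μ ≤ ∫ y, (ρ x * ρ y - ρ x * g x * (ρ y * g y)) ∂μ :=
          integral_mono_of_nonneg (ae_of_all _ (hK_nonneg x))
            ((hρ.const_mul _).sub (hρg.const_mul _)) (ae_of_all _ (hK_le x))
      _ = ρ x * A - ρ x * g x * B := by
          rw [integral_sub (hρ.const_mul _) (hρg.const_mul _), integral_const_mul,
            integral_const_mul]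
  calc ∫ x, ∫ y, K x y ∂μ ∂μ ≤ ∫ x, (ρ x * A - ρ x * g x * B) ∂μ :=
        integral_mono_of_nonneg (ae_of_all _ fun x ↦ integral_nonneg (hK_nonneg x))
          ((hρ.mul_const A).sub (hρg.mul_const B)) (ae_of_all _ inner)
    _ = A ^ 2 - B ^ 2 := by
        rw [integral_sub (hρ.mul_const A) (hρg.mul_const B), integral_mul_const,
          integral_mul_const]
        ring

/-- for the normalized Gaussian
`φ₊(X) = (2π)^{-1/4} σ_H^{-1/2} e^{-(X-X₀)²/(4σ_H²)} e^{-ip_H X}`, the squared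
Hilbert–Schmidt norm of the kernel
`φ₊(X) conj(φ₊(X')) (1 - e^{-(X-X')²/(2σ²)})` is at most `2σ_H²/σ²`. -/
theorem stmt14 (σ σH X0 pH : ℝ) (hσ : 0 < σ) (hσH : 0 < σH) :
    let φp : ℝ → ℂ := fun X =>
      ((((2 * Real.pi) ^ (-(1 : ℝ) / 4) / Real.sqrt σH) : ℝ) : ℂ)
        * Complex.exp (((-((X - X0) ^ 2) / (4 * σH ^ 2) : ℝ) : ℂ))
        * Complex.exp ((-Complex.I) * ((pH * X : ℝ) : ℂ))
    (∫ X : ℝ, ∫ X' : ℝ,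
        ‖φp X * (starRingEnd ℂ) (φp X')
          * (1 - ((Real.exp (-((X - X') ^ 2 / (2 * σ ^ 2))) : ℝ) : ℂ))‖ ^ 2)
      ≤ 2 * σH ^ 2 / σ ^ 2 := by
  intro φp
  set ρ := gaussianPDFReal X0 (σH ^ 2).toNNReal
  have hv : (σH ^ 2).toNNReal ≠ 0 := by simpa using hσH.ne'
  have hσ2 : 0 < σ ^ 2 := by positivity
  have hkernel (X X' : ℝ) :
      ‖φp X * (starRingEnd ℂ) (φp X')
          * (1 - ((Real.exp (-((X - X') ^ 2 / (2 * σ ^ 2))) : ℝ) : ℂ))‖ ^ 2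
        = ρ X * ρ X' * (1 - Real.exp (-((X - X') ^ 2 / (2 * σ ^ 2)))) ^ 2 := by
    have hφ : ∀ Y, ‖φp Y‖ ^ 2 = ρ Y := norm_sq_gaussianWavePacket hσH X0 pH
    rw [norm_mul_conj_mul_one_sub_ofReal_sq, hφ, hφ]
  calc _ ≤ (∫ X, ρ X) ^ 2 - (∫ X, ρ X * Real.exp (-(X - X0) ^ 2 / σ ^ 2)) ^ 2 := by
        refine integral_integral_le_sq_sub_sq (integrable_gaussianPDFReal _ _)
          (integrable_gaussianPDFReal_mul_exp X0 hv hσ2) (fun _ _ ↦ by positivity) fun X X' ↦ ?_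
        rw [hkernel]
        have hρ : 0 ≤ ρ X * ρ X' := mul_nonneg (gaussianPDFReal_nonneg _ _ _)
          (gaussianPDFReal_nonneg _ _ _)
        exact (mul_le_mul_of_nonneg_left
          (one_sub_exp_sq_le_one_sub_exp_mul_exp X X' X0 σ) hρ).trans_eq (by ring)
    _ = 2 * σH ^ 2 / (2 * σH ^ 2 + σ ^ 2) := by
        rw [integral_gaussianPDFReal_eq_one X0 hv, integral_gaussianPDFReal_mul_exp X0 hv hσ2,
          Real.sq_sqrt (by positivity), Real.coe_toNNReal _ (sq_nonneg σH)]
        field_simp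
        ring
    _ ≤ 2 * σH ^ 2 / σ ^ 2 := by gcongr; linarith [sq_nonneg σH]
end
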